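/- arXiv:1612.04794 — 4 statements merged into one kernel-verified Lean document; each statement's English description precedes it below -/
import Mathlib

section
/- (Combinatorial content of the Constrained k-near Editing theorem.) Fix a bijection β : Q → {1,…,|Q|} with prefixes P_j = {β⁻¹(1),…,β⁻¹(j)}, an initial bijection α₀ : S → {1,…,|S|}, and k ∈ ℕ. The minimum cardinality of an edit set F ⊆ S × Q such that the edited graph (S ∪ Q, E △ F) satisfies the interval property with respect to β and admits a k-near nested ordering of the students equals the minimum, over all k-near bijections π : S → {1,…,|S|} and all nondecreasing threshold sequences 0 ≤ j₁ ≤ … ≤ j_{|S|} ≤ |Q|, of the sum over i = 1,…,|S| of |N(π⁻¹(i)) △ P_{j_i}|. -/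
open Finset

/-- The neighborhood of a student `s` in the bipartite graph with edge set `E`. -/
def nbhd {S Q : Type*} [Fintype Q] [DecidableEq S] [DecidableEq Q]
    (E : Finset (S × Q)) (s : S) : Finset Q :=
  Finset.univ.filter fun q => (s, q) ∈ E

/-- The `j` easiest questions under the ordering `β` (`j ∈ {0, …, |Q|}`). -/
def prefixSet {Q : Type*} [Fintype Q] [DecidableEq Q]
    (β : Q ≃ Fin (Fintype.card Q)) (j : ℕ) : Finset Q :=
  Finset.univ.filter fun q => (β q : ℕ) < j

/-- `π` is a `k`-near ordering with respect to the initial ordering `α₀`. -/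
def kNear {S : Type*} [Fintype S] (α₀ π : S ≃ Fin (Fintype.card S)) (k : ℕ) : Prop :=
  ∀ s : S, ((π s : ℤ) - (α₀ s : ℤ)).natAbs ≤ k

/-!
An edit set `F` is determined by the edited graph `E △ F`, and its size is the sum over students
of `|N(s) △ N'(s)|`, where `N'` is the edited neighborhood. The interval property says that each
`N'(s)` is a prefix `P_j`, and since prefixes are ordered by inclusion exactly as their lengths,
nestedness along `π` says that the thresholds are nondecreasing along `π`. So edit sets with
a `k`-near nested ordering `π` and pairs (`π`, nondecreasing thresholds) correspond to each other
with equal costs: the two sets of attainable costs coincide, not only their minima.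
-/

section

variable {S Q : Type*} [Fintype Q] [DecidableEq S] [DecidableEq Q]

lemma sum_card_nbhd [Fintype S] (F : Finset (S × Q)) : ∑ s, (nbhd F s).card = F.card := by
  simp only [nbhd, card_filter]
  rw [← Fintype.sum_prod_type' (f := fun s q => if (s, q) ∈ F then 1 else 0), ← card_filter,
    filter_mem_eq_inter, univ_inter]

lemma card_prefixSet (β : Q ≃ Fin (Fintype.card Q)) {j : ℕ} (hj : j ≤ Fintype.card Q) :
    (prefixSet β j).card = j := by
  have : prefixSet β j = ({i | (i : ℕ) < j} : Finset (Fin _)).map β.symm.toEmbedding := by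
    ext q; simp [prefixSet, mem_map_equiv]
  rw [this, card_map, Fin.card_filter_val_lt, min_eq_right hj]

lemma prefixSet_mono (β : Q ≃ Fin (Fintype.card Q)) : Monotone (prefixSet β) := by
  intro i j hij q
  simp only [prefixSet, mem_filter, mem_univ, true_and]
  omega

lemma nbhd_symmDiff (E F : Finset (S × Q)) (s : S) :
    nbhd (symmDiff E F) s = symmDiff (nbhd E s) (nbhd F s) := by
  ext q; simp [nbhd, mem_symmDiff]

lemma card_symmDiff_eq_sum_card_symmDiff_nbhd [Fintype S] (E G : Finset (S × Q)) :
    (symmDiff E G).card = ∑ s, (symmDiff (nbhd E s) (nbhd G s)).card := by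
  simp only [← sum_card_nbhd, nbhd_symmDiff]

def ofNbhd [Fintype S] (t : S → Finset Q) : Finset (S × Q) :=
  univ.filter fun p => p.2 ∈ t p.1

lemma nbhd_ofNbhd [Fintype S] (t : S → Finset Q) (s : S) : nbhd (ofNbhd t) s = t s := by
  ext q; simp [nbhd, ofNbhd]

variable [Fintype S] {ι : Type*} [Fintype ι] [Preorder ι]

lemma exists_thresholds_of_edit (E F : Finset (S × Q)) (β : Q ≃ Fin (Fintype.card Q))
    (π : S ≃ ι)
    (hinterval : ∀ s, ∃ j ≤ Fintype.card Q, nbhd (symmDiff E F) s = prefixSet β j)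
    (hnest : ∀ s₁ s₂, π s₂ ≤ π s₁ → nbhd (symmDiff E F) s₂ ⊆ nbhd (symmDiff E F) s₁) :
    ∃ j : ι → ℕ, Monotone j ∧ (∀ i, j i ≤ Fintype.card Q) ∧
      F.card = ∑ i, (symmDiff (nbhd E (π.symm i)) (prefixSet β (j i))).card := by
  have hprefix (s : S) :
      prefixSet β (nbhd (symmDiff E F) s).card = nbhd (symmDiff E F) s := by
    obtain ⟨j, hj, hs⟩ := hinterval s
    rw [hs, card_prefixSet β hj]
  refine ⟨fun i => (nbhd (symmDiff E F) (π.symm i)).card, fun i₁ i₂ h => ?_, fun i => ?_, ?_⟩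
  · exact card_le_card (hnest _ _ (by simpa using h))
  · exact card_le_univ _
  · rw [← symmDiff_symmDiff_cancel_left E F, card_symmDiff_eq_sum_card_symmDiff_nbhd,
      symmDiff_symmDiff_cancel_left, ← π.symm.sum_comp]
    simp only [hprefix]

lemma exists_edit_of_thresholds (E : Finset (S × Q)) (β : Q ≃ Fin (Fintype.card Q))
    (π : S ≃ ι) (j : ι → ℕ) (hmono : Monotone j) (hle : ∀ i, j i ≤ Fintype.card Q) :
    ∃ F : Finset (S × Q),
      F.card = ∑ i, (symmDiff (nbhd E (π.symm i)) (prefixSet β (j i))).card ∧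
      (∀ s, ∃ j ≤ Fintype.card Q, nbhd (symmDiff E F) s = prefixSet β j) ∧
      ∀ s₁ s₂, π s₂ ≤ π s₁ → nbhd (symmDiff E F) s₂ ⊆ nbhd (symmDiff E F) s₁ := by
  set G := ofNbhd fun s => prefixSet β (j (π s))
  have hG (s : S) : nbhd (symmDiff E (symmDiff E G)) s = prefixSet β (j (π s)) := by
    rw [symmDiff_symmDiff_cancel_left, nbhd_ofNbhd]
  refine ⟨symmDiff E G, ?_, fun s => ⟨_, hle _, hG s⟩, fun s₁ s₂ h => ?_⟩
  · rw [card_symmDiff_eq_sum_card_symmDiff_nbhd, ← π.symm.sum_comp]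
    simp only [G, nbhd_ofNbhd, Equiv.apply_symm_apply]
  · rw [hG, hG]
    exact prefixSet_mono β (hmono h)

end

/-- Combinatorial content of the Constrained `k`-near Editing theorem: the minimum number
of edge edits after which the graph satisfies the interval property w.r.t. the fixed question
ordering `β` and admits a `k`-near nested student ordering equals the minimum over `k`-near
orderings `π` and nondecreasing threshold sequences of the total per-position editing cost. -/
theorem stmt6 {S Q : Type*} [Fintype S] [Fintype Q] [DecidableEq S] [DecidableEq Q]
    (E : Finset (S × Q)) (β : Q ≃ Fin (Fintype.card Q))
    (α₀ : S ≃ Fin (Fintype.card S)) (k : ℕ) :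
    sInf {c : ℕ | ∃ F : Finset (S × Q), F.card = c ∧
        (∀ s : S, ∃ j ≤ Fintype.card Q, nbhd (symmDiff E F) s = prefixSet β j) ∧
        (∃ π : S ≃ Fin (Fintype.card S), kNear α₀ π k ∧
          ∀ s₁ s₂ : S, π s₂ ≤ π s₁ →
            nbhd (symmDiff E F) s₂ ⊆ nbhd (symmDiff E F) s₁)} =
    sInf {c : ℕ | ∃ π : S ≃ Fin (Fintype.card S), kNear α₀ π k ∧
        ∃ j : Fin (Fintype.card S) → ℕ, Monotone j ∧ (∀ i, j i ≤ Fintype.card Q) ∧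
          c = ∑ i : Fin (Fintype.card S),
            (symmDiff (nbhd E (π.symm i)) (prefixSet β (j i))).card} := by
  congr 1
  ext c
  constructor
  · rintro ⟨F, rfl, hinterval, π, hk, hnest⟩
    exact ⟨π, hk, exists_thresholds_of_edit E F β π hinterval hnest⟩
  · rintro ⟨π, hk, j, hmono, hle, rfl⟩
    obtain ⟨F, hcard, hinterval, hnest⟩ := exists_edit_of_thresholds E β π j hmono hle
    exact ⟨F, hcard, hinterval, π, hk, hnest⟩
end

section
/- (Combinatorial content of the Constrained k-near Addition theorem.) Fix a bijection β : Q → {1,…,|Q|} with prefixes P_j = {β⁻¹(1),…,β⁻¹(j)}, an initial bijection α₀ : S → {1,…,|S|}, and k ∈ ℕ. The minimum cardinality of an addition set F ⊆ (S × Q) \ E such that the graph (S ∪ Q, E ∪ F) satisfies the interval property with respect to β and admits a k-near nested ordering of the students equals the minimum, over all k-near bijections π : S → {1,…,|S|} and all nondecreasing threshold sequences 0 ≤ j₁ ≤ … ≤ j_{|S|} ≤ |Q| satisfying N(π⁻¹(i)) ⊆ P_{j_i} for every i, of the sum over i = 1,…,|S| of |P_{j_i} \ N(π⁻¹(i))|.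 -/
open Finset

lemma nbhd_union {S Q : Type*} [Fintype Q] [DecidableEq S] [DecidableEq Q]
    (E F : Finset (S × Q)) (s : S) : nbhd (E ∪ F) s = nbhd E s ∪ nbhd F s := by
  ext q; simp [nbhd]

lemma card_eq_sum_nbhd {S Q : Type*} [Fintype S] [Fintype Q] [DecidableEq S] [DecidableEq Q]
    (F : Finset (S × Q)) : F.card = ∑ s : S, (nbhd F s).card := by
  rw [Finset.card_eq_sum_card_fiberwise (f := Prod.fst) (fun p _ => mem_univ _)]
  refine Finset.sum_congr rfl fun s _ => ?_
  refine Finset.card_bij (fun p _ => p.2) ?_ ?_ ?_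
  · intro p hp; simp only [mem_filter] at hp
    simp [nbhd, ← hp.2, hp.1]
  · intro p hp p' hp' h
    simp only [mem_filter] at hp hp'
    exact Prod.ext (hp.2.trans hp'.2.symm) h
  · intro q hq
    simp only [nbhd, mem_filter, mem_univ, true_and] at hq
    exact ⟨(s, q), by simp [hq], rfl⟩

lemma prefixSet_mono_s7 {Q : Type*} [Fintype Q] [DecidableEq Q]
    (β : Q ≃ Fin (Fintype.card Q)) {j j' : ℕ} (h : j ≤ j') :
    prefixSet β j ⊆ prefixSet β j' := by
  intro q hq; simp only [prefixSet, mem_filter, mem_univ, true_and] at *; omega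

lemma prefixSet_le {Q : Type*} [Fintype Q] [DecidableEq Q]
    (β : Q ≃ Fin (Fintype.card Q)) {j j' : ℕ} (hj : j ≤ Fintype.card Q)
    (h : prefixSet β j ⊆ prefixSet β j') : j ≤ j' := by
  by_contra hlt
  push_neg at hlt
  have hq : β.symm ⟨j', lt_of_lt_of_le hlt hj⟩ ∈ prefixSet β j := by
    simp [prefixSet, hlt]
  have := h hq
  simp [prefixSet] at this

/-- Combinatorial content of the Constrained `k`-near Addition theorem: the minimum number
of edge additions after which the graph satisfies the interval property w.r.t. the fixed
question ordering `β` and admits a `k`-near nested student ordering equals the minimum over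
`k`-near orderings `π` and nondecreasing threshold sequences dominating the existing
neighborhoods of the total per-position addition cost. -/
theorem stmt7 {S Q : Type*} [Fintype S] [Fintype Q] [DecidableEq S] [DecidableEq Q]
    (E : Finset (S × Q)) (β : Q ≃ Fin (Fintype.card Q))
    (α₀ : S ≃ Fin (Fintype.card S)) (k : ℕ) :
    sInf {c : ℕ | ∃ F : Finset (S × Q), Disjoint F E ∧ F.card = c ∧
        (∀ s : S, ∃ j ≤ Fintype.card Q, nbhd (E ∪ F) s = prefixSet β j) ∧
        (∃ π : S ≃ Fin (Fintype.card S), kNear α₀ π k ∧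
          ∀ s₁ s₂ : S, π s₂ ≤ π s₁ → nbhd (E ∪ F) s₂ ⊆ nbhd (E ∪ F) s₁)} =
    sInf {c : ℕ | ∃ π : S ≃ Fin (Fintype.card S), kNear α₀ π k ∧
        ∃ j : Fin (Fintype.card S) → ℕ, Monotone j ∧ (∀ i, j i ≤ Fintype.card Q) ∧
          (∀ i, nbhd E (π.symm i) ⊆ prefixSet β (j i)) ∧
          c = ∑ i : Fin (Fintype.card S),
            (prefixSet β (j i) \ nbhd E (π.symm i)).card} := by
  congr 1
  ext c
  simp only [Set.mem_setOf_eq]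
  constructor
  · rintro ⟨F, hdisj, rfl, hint, π, hnear, hnested⟩
    have hnE : ∀ s, nbhd E s ⊆ nbhd (E ∪ F) s := by
      intro s q hq
      simp only [nbhd, mem_filter, mem_univ, true_and, Finset.mem_union] at *
      exact Or.inl hq
    refine ⟨π, hnear, fun i => (hint (π.symm i)).choose, ?_, ?_, ?_, ?_⟩
    · intro i i' hii
      have h1 := (hint (π.symm i)).choose_spec
      have h2 := (hint (π.symm i')).choose_spec
      refine prefixSet_le β h1.1 ?_
      rw [← h1.2, ← h2.2]
      apply hnested
      simpa using hii
    · exact fun i => (hint (π.symm i)).choose_spec.1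
    · intro i
      have h1 := (hint (π.symm i)).choose_spec
      rw [← h1.2]; exact hnE _
    · rw [card_eq_sum_nbhd F, ← Equiv.sum_comp π.symm (fun s => (nbhd F s).card)]
      refine Finset.sum_congr rfl fun i _ => ?_
      have h1 := (hint (π.symm i)).choose_spec
      have hdis : Disjoint (nbhd E (π.symm i)) (nbhd F (π.symm i)) := by
        rw [Finset.disjoint_left]
        intro q hqE hqF
        simp only [nbhd, mem_filter, mem_univ, true_and] at hqE hqF
        exact Finset.disjoint_left.mp hdisj hqF hqE
      rw [← h1.2, nbhd_union, Finset.union_sdiff_cancel_left hdis]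
  · rintro ⟨π, hnear, j, hmono, hle, hsub, rfl⟩
    set F : Finset (S × Q) :=
      Finset.univ.filter (fun p : S × Q => p.2 ∈ prefixSet β (j (π p.1)) ∧ p ∉ E) with hF
    have hnF : ∀ s, nbhd F s = prefixSet β (j (π s)) \ nbhd E s := by
      intro s; ext q
      simp [nbhd, hF, Finset.mem_sdiff]
    have hsub' : ∀ s : S, nbhd E s ⊆ prefixSet β (j (π s)) := by
      intro s
      have := hsub (π s)
      simpa using this
    have hEF : ∀ s, nbhd (E ∪ F) s = prefixSet β (j (π s)) := by
      intro s
      rw [nbhd_union, hnF, Finset.union_sdiff_of_subset (hsub' s)]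
    refine ⟨F, ?_, ?_, fun s => ⟨j (π s), hle _, hEF s⟩, π, hnear, ?_⟩
    · rw [Finset.disjoint_left]
      intro p hp
      simp only [hF, mem_filter] at hp
      exact hp.2.2
    · rw [card_eq_sum_nbhd F, ← Equiv.sum_comp π.symm (fun s => (nbhd F s).card)]
      refine Finset.sum_congr rfl fun i _ => ?_
      rw [hnF]
      simp
    · intro s₁ s₂ h
      rw [hEF, hEF]
      exact prefixSet_mono_s7 β (hmono h)
end

section
/- (Combinatorial content of the Unconstrained k-near Addition theorem.) Fix an initial bijection α₀ : S → {1,…,|S|} and k ∈ ℕ. The minimum cardinality of an addition set F ⊆ (S × Q) \ E such that the graph (S ∪ Q, E ∪ F) admits a k-near nested ordering of the students equals the minimum, over all k-near bijections π : S → {1,…,|S|}, of the sum over i = 1,…,|S| of |(⋃_{l ≤ i} N(π⁻¹(l))) \ N(π⁻¹(i))|. -/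
open Finset

section Aux

variable {S Q : Type*} [Fintype S] [Fintype Q] [DecidableEq S] [DecidableEq Q]

omit [Fintype S] in
lemma mem_nbhd (E : Finset (S × Q)) (s : S) (q : Q) : q ∈ nbhd E s ↔ (s, q) ∈ E := by
  simp [nbhd]

/-- The set of missing edge endpoints at position `i`. -/
def Dset (E : Finset (S × Q)) (π : S ≃ Fin (Fintype.card S)) (i : Fin (Fintype.card S)) :
    Finset Q :=
  ((Finset.Iic i).biUnion fun l => nbhd E (π.symm l)) \ nbhd E (π.symm i)

/-- The canonical addition set for an ordering `π`. -/
def Fset (E : Finset (S × Q)) (π : S ≃ Fin (Fintype.card S)) : Finset (S × Q) :=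
  Finset.univ.biUnion fun i => (Dset E π i).image fun q => (π.symm i, q)

lemma mem_Fset (E : Finset (S × Q)) (π : S ≃ Fin (Fintype.card S)) (s : S) (q : Q) :
    (s, q) ∈ Fset E π ↔ q ∈ Dset E π (π s) := by
  simp only [Fset, Finset.mem_biUnion, Finset.mem_univ, true_and, Finset.mem_image]
  constructor
  · rintro ⟨i, q', hq', heq⟩
    injection heq with h1 h2
    subst h2
    have : i = π s := by rw [← h1]; simp
    subst this; exact hq'
  · intro h
    exact ⟨π s, q, h, by simp⟩

lemma card_Fset (E : Finset (S × Q)) (π : S ≃ Fin (Fintype.card S)) :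
    (Fset E π).card = ∑ i : Fin (Fintype.card S), (Dset E π i).card := by
  rw [Fset, Finset.card_biUnion]
  · refine Finset.sum_congr rfl fun i _ => ?_
    exact Finset.card_image_of_injective _ (fun a b h => by simpa using h)
  · intro i _ j _ hij
    simp only [Finset.disjoint_left, Finset.mem_image]
    rintro p ⟨q, _, rfl⟩ ⟨q', _, h⟩
    injection h with h1 _
    exact hij (π.symm.injective h1).symm

lemma Fset_disjoint (E : Finset (S × Q)) (π : S ≃ Fin (Fintype.card S)) :
    Disjoint (Fset E π) E := by
  rw [Finset.disjoint_left]
  rintro ⟨s, q⟩ hF hE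
  rw [mem_Fset] at hF
  have : q ∉ nbhd E (π.symm (π s)) := (Finset.mem_sdiff.mp hF).2
  rw [Equiv.symm_apply_apply, mem_nbhd] at this
  exact this hE

lemma nbhd_union_s8 (E : Finset (S × Q)) (π : S ≃ Fin (Fintype.card S)) (s : S) :
    nbhd (E ∪ Fset E π) s = (Finset.Iic (π s)).biUnion fun l => nbhd E (π.symm l) := by
  ext q
  rw [mem_nbhd, Finset.mem_union, mem_Fset, Dset, Finset.mem_sdiff,
    Equiv.symm_apply_apply, mem_nbhd]
  constructor
  · rintro (h | ⟨h, _⟩)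
    · exact Finset.mem_biUnion.mpr ⟨π s, Finset.mem_Iic.mpr le_rfl,
        by rwa [mem_nbhd, Equiv.symm_apply_apply]⟩
    · exact h
  · intro h
    by_cases hE : (s, q) ∈ E
    · exact Or.inl hE
    · exact Or.inr ⟨h, hE⟩

end Aux

/-- Combinatorial content of the Unconstrained `k`-near Addition theorem: the minimum number
of edge additions after which the graph admits a `k`-near nested student ordering equals the
minimum over `k`-near orderings `π` of
`∑ i, |(⋃_{l ≤ i} N(π⁻¹(l))) \ N(π⁻¹(i))|`. -/
theorem stmt8 {S Q : Type*} [Fintype S] [Fintype Q] [DecidableEq S] [DecidableEq Q]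
    (E : Finset (S × Q)) (α₀ : S ≃ Fin (Fintype.card S)) (k : ℕ) :
    sInf {c : ℕ | ∃ F : Finset (S × Q), Disjoint F E ∧ F.card = c ∧
        ∃ π : S ≃ Fin (Fintype.card S), kNear α₀ π k ∧
          ∀ s₁ s₂ : S, π s₂ ≤ π s₁ → nbhd (E ∪ F) s₂ ⊆ nbhd (E ∪ F) s₁} =
    sInf {c : ℕ | ∃ π : S ≃ Fin (Fintype.card S), kNear α₀ π k ∧
        c = ∑ i : Fin (Fintype.card S),
          (((Finset.Iic i).biUnion fun l => nbhd E (π.symm l)) \ nbhd E (π.symm i)).card} := by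
  set A := {c : ℕ | ∃ F : Finset (S × Q), Disjoint F E ∧ F.card = c ∧
        ∃ π : S ≃ Fin (Fintype.card S), kNear α₀ π k ∧
          ∀ s₁ s₂ : S, π s₂ ≤ π s₁ → nbhd (E ∪ F) s₂ ⊆ nbhd (E ∪ F) s₁} with hA
  set B := {c : ℕ | ∃ π : S ≃ Fin (Fintype.card S), kNear α₀ π k ∧
        c = ∑ i : Fin (Fintype.card S),
          (((Finset.Iic i).biUnion fun l => nbhd E (π.symm l)) \ nbhd E (π.symm i)).card} with hB
  have hnear₀ : kNear α₀ α₀ k := fun s => by simp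
  -- from any k-near π we get an element of A of value the sum
  have key : ∀ π : S ≃ Fin (Fintype.card S), kNear α₀ π k →
      (∑ i : Fin (Fintype.card S), (Dset E π i).card) ∈ A := by
    intro π hπ
    refine ⟨Fset E π, Fset_disjoint E π, card_Fset E π, π, hπ, ?_⟩
    intro s₁ s₂ h
    rw [nbhd_union_s8, nbhd_union_s8]
    exact Finset.biUnion_subset_biUnion_of_subset_left _ (Finset.Iic_subset_Iic.mpr h)
  have hBne : B.Nonempty := ⟨_, α₀, hnear₀, rfl⟩
  have hAne : A.Nonempty := ⟨_, key α₀ hnear₀⟩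
  -- from any element of A, get an element of B that is ≤ it
  have dir : ∀ c ∈ A, ∃ d ∈ B, d ≤ c := by
    rintro c ⟨F, hdisj, hcard, π, hπ, hnest⟩
    refine ⟨∑ i : Fin (Fintype.card S), (Dset E π i).card, ⟨π, hπ, rfl⟩, ?_⟩
    rw [← card_Fset, ← hcard]
    apply Finset.card_le_card
    rintro ⟨s, q⟩ hsq
    rw [mem_Fset, Dset, Finset.mem_sdiff, Equiv.symm_apply_apply] at hsq
    obtain ⟨hmem, hnot⟩ := hsq
    obtain ⟨l, hl, hql⟩ := Finset.mem_biUnion.mp hmem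
    have h1 : q ∈ nbhd (E ∪ F) (π.symm l) := by
      rw [mem_nbhd, Finset.mem_union]
      exact Or.inl ((mem_nbhd E _ q).mp hql)
    have h2 : q ∈ nbhd (E ∪ F) s := by
      refine hnest s (π.symm l) ?_ h1
      simpa using Finset.mem_Iic.mp hl
    rw [mem_nbhd, Finset.mem_union] at h2
    rcases h2 with h | h
    · exact absurd ((mem_nbhd E s q).mpr h) hnot
    · exact h
  apply le_antisymm
  · -- sInf A ≤ sInf B
    obtain ⟨π, hπ, hval⟩ := Nat.sInf_mem hBne
    have : sInf B ∈ A := by rw [hval]; exact key π hπ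
    exact Nat.sInf_le this
  · -- sInf B ≤ sInf A
    obtain ⟨d, hd, hdle⟩ := dir _ (Nat.sInf_mem hAne)
    exact le_trans (Nat.sInf_le hd) hdle
end

section
/- (Order-enforcement gadget lemma.) Let G = (S ∪ Q, E) be a finite bipartite graph, let s, s' ∈ S, and let t ∈ ℕ. Suppose there exist t+1 distinct questions q₁,…,q_{t+1} each adjacent to s and not adjacent to s' in G. Then for every edit set F ⊆ S × Q with |F| ≤ t such that in the edited graph (S ∪ Q, E △ F) the student neighborhoods are pairwise comparable under inclusion, the edited neighborhood of s' is a proper subset of the edited neighborhood of s. -/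
open Finset

/-- Order-enforcement gadget lemma: if `t+1` distinct questions are adjacent to `s` and not
to `s'`, then any edit set of size at most `t` whose edited graph has pairwise comparable
student neighborhoods leaves the edited neighborhood of `s'` a proper subset of that of `s`. -/
theorem stmt14 {S Q : Type*} [Fintype S] [Fintype Q] [DecidableEq S] [DecidableEq Q]
    (E : Finset (S × Q)) (s s' : S) (t : ℕ)
    (qs : Finset Q) (hqs : qs.card = t + 1)
    (hadj : ∀ q ∈ qs, (s, q) ∈ E ∧ (s', q) ∉ E)
    (F : Finset (S × Q)) (hF : F.card ≤ t)
    (hcomp : ∀ s₁ s₂ : S,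
      nbhd (symmDiff E F) s₁ ⊆ nbhd (symmDiff E F) s₂ ∨
      nbhd (symmDiff E F) s₂ ⊆ nbhd (symmDiff E F) s₁) :
    nbhd (symmDiff E F) s' ⊂ nbhd (symmDiff E F) s := by
  -- find q ∈ qs with (s,q) ∉ F and (s',q) ∉ F
  obtain ⟨q, hq, hqF⟩ : ∃ q ∈ qs, (s, q) ∉ F ∧ (s', q) ∉ F := by
    by_contra h
    push_neg at h
    have hinj : Set.InjOn (fun q => if (s, q) ∈ F then (s, q) else (s', q)) qs := by
      intro a ha b hb hab
      simp only at hab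
      split_ifs at hab <;> exact congrArg Prod.snd hab
    have hsub : qs.image (fun q => if (s, q) ∈ F then (s, q) else (s', q)) ⊆ F := by
      intro p hp
      simp only [mem_image] at hp
      obtain ⟨a, ha, rfl⟩ := hp
      split_ifs with h1
      · exact h1
      · exact h a ha h1
    have := card_le_card hsub
    rw [Finset.card_image_of_injOn hinj, hqs] at this
    omega
  have hmemE : (s, q) ∈ symmDiff E F := by
    simp [symmDiff, (hadj q hq).1, hqF.1]
  have hnotE : (s', q) ∉ symmDiff E F := by
    simp [symmDiff, (hadj q hq).2, hqF.2]
  have hqs' : q ∈ nbhd (symmDiff E F) s := by simp [nbhd, hmemE]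
  have hqs'' : q ∉ nbhd (symmDiff E F) s' := by simp [nbhd, hnotE]
  rcases hcomp s' s with hsub | hsub
  · exact ⟨hsub, fun h => hqs'' (h hqs')⟩
  · exact absurd (hsub hqs') hqs''
end
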